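/- arXiv:0707.0476 — 3 statements merged into one kernel-verified Lean document; each statement's English description precedes it below -/
import Mathlib

section
/- If H ~ Exp(1) and 0 < δ < 1, then the Rayleigh-fading FPC loss factor L^{fpc}(s) = 1/(Γ(1+δ)·Γ(1−sδ)·Γ(1−(1−s)δ)) is maximized over s ∈ [0,1] at s = 1/2. -/
open Real Set

/-- For Rayleigh fading (`H ~ Exp(1)`) and `0 < δ < 1`, the FPC loss factor
`L^{fpc}(s) = 1 / (Γ(1+δ) Γ(1-sδ) Γ(1-(1-s)δ))` is maximized over `s ∈ [0,1]` at `s = 1/2`. -/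
theorem statement9 (δ : ℝ) (hδ : δ ∈ Set.Ioo (0 : ℝ) 1) :
    ∀ s ∈ Set.Icc (0 : ℝ) 1,
      1 / (Real.Gamma (1 + δ) * Real.Gamma (1 - s * δ) * Real.Gamma (1 - (1 - s) * δ)) ≤
      1 / (Real.Gamma (1 + δ) * Real.Gamma (1 - (1/2 : ℝ) * δ)
            * Real.Gamma (1 - (1 - (1/2 : ℝ)) * δ)) := by
  obtain ⟨hδ0, hδ1⟩ := hδ
  intro s hs
  obtain ⟨hs0, hs1⟩ := hs
  have ha : (0:ℝ) < 1 - s * δ := by nlinarith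
  have hb : (0:ℝ) < 1 - (1 - s) * δ := by nlinarith
  have hm : (0:ℝ) < 1 - (1/2:ℝ) * δ := by nlinarith
  have hC : 0 < Real.Gamma (1 + δ) := Real.Gamma_pos_of_pos (by linarith)
  have hGa : 0 < Real.Gamma (1 - s * δ) := Real.Gamma_pos_of_pos ha
  have hGb : 0 < Real.Gamma (1 - (1 - s) * δ) := Real.Gamma_pos_of_pos hb
  have hGm : 0 < Real.Gamma (1 - (1/2:ℝ) * δ) := Real.Gamma_pos_of_pos hm
  have key := Real.convexOn_log_Gamma.2 (Set.mem_Ioi.2 ha) (Set.mem_Ioi.2 hb)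
    (by norm_num : (0:ℝ) ≤ (1/2:ℝ)) (by norm_num : (0:ℝ) ≤ (1/2:ℝ)) (by norm_num)
  have hmid : (1/2:ℝ) • (1 - s * δ) + (1/2:ℝ) • (1 - (1 - s) * δ) = 1 - (1/2:ℝ) * δ := by
    simp only [smul_eq_mul]; ring
  rw [hmid] at key
  simp only [Function.comp_apply, smul_eq_mul] at key
  have hlog : 2 * Real.log (Real.Gamma (1 - (1/2:ℝ) * δ)) ≤
      Real.log (Real.Gamma (1 - s * δ)) + Real.log (Real.Gamma (1 - (1 - s) * δ)) := by
    linarith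
  have hsq : Real.Gamma (1 - (1/2:ℝ) * δ) ^ 2 ≤
      Real.Gamma (1 - s * δ) * Real.Gamma (1 - (1 - s) * δ) := by
    have := Real.exp_le_exp.2 hlog
    rwa [two_mul, Real.exp_add, Real.exp_add, Real.exp_log hGa, Real.exp_log hGb,
      Real.exp_log hGm, ← sq] at this
  have h12 : (1 - (1 - (1/2:ℝ)) * δ) = 1 - (1/2:ℝ) * δ := by ring
  rw [h12]
  apply one_div_le_one_div_of_le
  · positivity
  · rw [mul_assoc, mul_assoc]
    apply mul_le_mul_of_nonneg_left _ hC.le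
    nlinarith
end

section
/- For any non-negative random variable X and any s₁ < s₂ ≤ 1/2 (with finite moments), h(s₁) ≥ h(s₂) where h(s) = E[X^{-s}]·E[X^{s-1}]; i.e., h is nonincreasing on (−∞, 1/2] and nondecreasing on [1/2, ∞). -/
/-!
By Hölder's inequality `s ↦ log E[X^s]` is convex, hence so is `g(s) = log E[X^{-s}]`, and
`log h(s) = g(s) + g(1 - s)`. For `s₁ ≤ s₂ ≤ 1/2` the points `s₂, 1 - s₂` lie in
`[s₁, 1 - s₁]` and have the same sum as its endpoints, so convexity of `g` gives
`g(s₂) + g(1 - s₂) ≤ g(s₁) + g(1 - s₁)`. The case `s ≥ 1/2` follows from `h(s) = h(1 - s)`.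
-/

open MeasureTheory Real Set

theorem ConvexOn.map_add_map_le_of_add_eq {s : Set ℝ} {g : ℝ → ℝ} (hg : ConvexOn ℝ s g)
    {a b x y : ℝ} (ha : a ∈ s) (hb : b ∈ s) (hax : a ≤ x) (hxb : x ≤ b) (hsum : x + y = a + b) :
    g x + g y ≤ g a + g b := by
  rcases hax.trans hxb |>.eq_or_lt with rfl | hab
  · obtain rfl : x = a := le_antisymm hxb hax
    obtain rfl : y = x := by linarith
    rfl
  -- `x` and `y` are the convex combinations of `a` and `b` with swapped weights.
  set t := (b - x) / (b - a)
  have hba : b - a ≠ 0 := (sub_pos.2 hab).ne'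
  have ht0 : 0 ≤ t := div_nonneg (by linarith) (by linarith)
  have ht1 : 0 ≤ 1 - t := by
    rw [sub_nonneg]; exact div_le_one_of_le₀ (by linarith) (by linarith)
  have hx : t • a + (1 - t) • b = x := by
    simp only [smul_eq_mul, t]; field_simp; ring
  have hy : (1 - t) • a + (1 - (1 - t)) • b = y := by
    simp only [smul_eq_mul, t]; field_simp; linear_combination (a - b) * hsum
  have h₁ := hg.2 ha hb ht0 ht1 (add_sub_cancel t 1)
  have h₂ := hg.2 ha hb ht1 (by linarith : 0 ≤ 1 - (1 - t)) (add_sub_cancel (1 - t) 1)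
  rw [hx] at h₁
  rw [hy] at h₂
  simp only [smul_eq_mul] at h₁ h₂
  linarith

theorem ConvexOn.antitoneOn_add_comp_sub {g : ℝ → ℝ} (hg : ConvexOn ℝ univ g) (c : ℝ) :
    AntitoneOn (fun s => g s + g (c - s)) (Iic (c / 2)) := by
  intro s₁ _ s₂ hs₂ h12
  exact hg.map_add_map_le_of_add_eq (mem_univ _) (mem_univ _) h12
    (by linarith [mem_Iic.1 hs₂]) (by ring)

theorem ConvexOn.monotoneOn_add_comp_sub {g : ℝ → ℝ} (hg : ConvexOn ℝ univ g) (c : ℝ) :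
    MonotoneOn (fun s => g s + g (c - s)) (Ici (c / 2)) := by
  intro s₁ hs₁ s₂ hs₂ h12
  have := hg.antitoneOn_add_comp_sub c (a := c - s₂) (b := c - s₁)
    (by simp only [mem_Iic]; linarith [mem_Ici.1 hs₂])
    (by simp only [mem_Iic]; linarith [mem_Ici.1 hs₁]) (by linarith)
  simp only [sub_sub_cancel] at this
  linarith

theorem antitoneOn_monotoneOn_mul_comp_sub {M : ℝ → ℝ} (hM0 : ∀ s, 0 < M s)
    (hM : ConvexOn ℝ univ fun s => log (M s)) (c : ℝ) :
    AntitoneOn (fun s => M s * M (c - s)) (Iic (c / 2)) ∧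
      MonotoneOn (fun s => M s * M (c - s)) (Ici (c / 2)) := by
  have hexp : (fun s => M s * M (c - s)) = fun s => exp (log (M s) + log (M (c - s))) := by
    funext s
    rw [exp_add, exp_log (hM0 s), exp_log (hM0 _)]
  rw [hexp]
  exact ⟨exp_monotone.comp_antitoneOn (hM.antitoneOn_add_comp_sub c),
    exp_monotone.comp_monotoneOn (hM.monotoneOn_add_comp_sub c)⟩

theorem integral_rpow_mul_rpow_le {α : Type*} [MeasurableSpace α] {μ : Measure α} {f g : α → ℝ}
    (hf0 : 0 ≤ᵐ[μ] f) (hg0 : 0 ≤ᵐ[μ] g) (hf : Integrable f μ) (hg : Integrable g μ)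
    {p q : ℝ} (hp : 0 ≤ p) (hq : 0 ≤ q) (hpq : p + q = 1) :
    ∫ a, f a ^ p * g a ^ q ∂μ ≤ (∫ a, f a ∂μ) ^ p * (∫ a, g a ∂μ) ^ q := by
  have hfg0 : 0 ≤ᵐ[μ] fun a => f a ^ p * g a ^ q := by
    filter_upwards [hf0, hg0] with a hfa hga
    exact mul_nonneg (rpow_nonneg hfa p) (rpow_nonneg hga q)
  have hfg : AEStronglyMeasurable (fun a => f a ^ p * g a ^ q) μ :=
    (hf.1.aemeasurable.pow_const p |>.mul (hg.1.aemeasurable.pow_const q)).aestronglyMeasurable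
  rw [integral_eq_lintegral_of_nonneg_ae hfg0 hfg, integral_eq_lintegral_of_nonneg_ae hf0 hf.1,
    integral_eq_lintegral_of_nonneg_ae hg0 hg.1, ENNReal.toReal_rpow, ENNReal.toReal_rpow,
    ← ENNReal.toReal_mul]
  refine ENNReal.toReal_mono ?_ ?_
  · exact ENNReal.mul_ne_top
      (ENNReal.rpow_ne_top_of_nonneg hp ((lintegral_ofReal_ne_top_iff_integrable hf.1 hf0).2 hf))
      (ENNReal.rpow_ne_top_of_nonneg hq ((lintegral_ofReal_ne_top_iff_integrable hg.1 hg0).2 hg))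
  calc ∫⁻ a, ENNReal.ofReal (f a ^ p * g a ^ q) ∂μ
      = ∫⁻ a, ENNReal.ofReal (f a) ^ p * ENNReal.ofReal (g a) ^ q ∂μ := by
        refine lintegral_congr_ae ?_
        filter_upwards [hf0, hg0] with a hfa hga
        rw [ENNReal.ofReal_mul (rpow_nonneg hfa p), ENNReal.ofReal_rpow_of_nonneg hfa hp,
          ENNReal.ofReal_rpow_of_nonneg hga hq]
    _ ≤ _ := ENNReal.lintegral_mul_norm_pow_le hf.1.aemeasurable.ennreal_ofReal
        hg.1.aemeasurable.ennreal_ofReal hp hq hpq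

section Moments

variable {Ω : Type*} [MeasurableSpace Ω] {μ : Measure Ω} [NeZero μ] {X : Ω → ℝ}

theorem integral_rpow_pos (hX : ∀ ω, 0 < X ω) {s : ℝ} (hint : Integrable (fun ω => X ω ^ s) μ) :
    0 < ∫ ω, X ω ^ s ∂μ := by
  rw [integral_pos_iff_support_of_nonneg (fun ω => (rpow_pos_of_pos (hX ω) s).le) hint,
    Function.support_eq_univ fun ω => (rpow_pos_of_pos (hX ω) s).ne']
  exact Measure.measure_univ_pos.2 (NeZero.ne μ)

theorem convexOn_log_integral_rpow (hX : ∀ ω, 0 < X ω)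
    (hint : ∀ s : ℝ, Integrable (fun ω => X ω ^ s) μ) :
    ConvexOn ℝ univ fun s : ℝ => log (∫ ω, X ω ^ s ∂μ) := by
  refine ⟨convex_univ, fun x _ y _ a b ha hb hab => ?_⟩
  have hsplit : ∫ ω, X ω ^ (a • x + b • y) ∂μ = ∫ ω, (X ω ^ x) ^ a * (X ω ^ y) ^ b ∂μ := by
    refine integral_congr_ae (Filter.Eventually.of_forall fun ω => ?_)
    simp only [smul_eq_mul]
    rw [← rpow_mul (hX ω).le, ← rpow_mul (hX ω).le, ← rpow_add (hX ω), mul_comm x, mul_comm y]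
  have hholder := integral_rpow_mul_rpow_le
    (Filter.Eventually.of_forall fun ω => (rpow_pos_of_pos (hX ω) x).le)
    (Filter.Eventually.of_forall fun ω => (rpow_pos_of_pos (hX ω) y).le) (hint x) (hint y) ha hb hab
  have hx := integral_rpow_pos hX (hint x)
  have hy := integral_rpow_pos hX (hint y)
  calc log (∫ ω, X ω ^ (a • x + b • y) ∂μ)
      ≤ log ((∫ ω, X ω ^ x ∂μ) ^ a * (∫ ω, X ω ^ y ∂μ) ^ b) :=
        log_le_log (integral_rpow_pos hX (hint _)) (hsplit ▸ hholder)
    _ = a • log (∫ ω, X ω ^ x ∂μ) + b • log (∫ ω, X ω ^ y ∂μ) := by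
        rw [log_mul (rpow_pos_of_pos hx a).ne' (rpow_pos_of_pos hy b).ne',
          log_rpow hx, log_rpow hy, smul_eq_mul, smul_eq_mul]

end Moments

/-- `h(s) = E[X^{-s}] E[X^{s-1}]` is nonincreasing on `(-∞, 1/2]` and nondecreasing on
`[1/2, ∞)`; in particular `s₁ < s₂ ≤ 1/2` implies `h(s₁) ≥ h(s₂)`. -/
theorem statement11 {Ω : Type*} [MeasurableSpace Ω] (μ : Measure Ω) [IsProbabilityMeasure μ]
    (X : Ω → ℝ) (hXpos : ∀ ω, 0 < X ω)
    (hint : ∀ s : ℝ, Integrable (fun ω => X ω ^ (-s)) μ ∧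
      Integrable (fun ω => X ω ^ (s - 1)) μ) :
    AntitoneOn (fun s : ℝ => (∫ ω, X ω ^ (-s) ∂μ) * ∫ ω, X ω ^ (s - 1) ∂μ)
      (Set.Iic (1/2 : ℝ)) ∧
    MonotoneOn (fun s : ℝ => (∫ ω, X ω ^ (-s) ∂μ) * ∫ ω, X ω ^ (s - 1) ∂μ)
      (Set.Ici (1/2 : ℝ)) := by
  have hmoments : ∀ t : ℝ, Integrable (fun ω => X ω ^ t) μ := fun t => by
    simpa using (hint (-t)).1
  have hlog : ConvexOn ℝ univ fun s : ℝ => log (∫ ω, X ω ^ (-s) ∂μ) :=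
    (convexOn_log_integral_rpow hXpos hmoments).comp_linearMap (-LinearMap.id)
  have hsymm : (fun s : ℝ => (∫ ω, X ω ^ (-s) ∂μ) * ∫ ω, X ω ^ (s - 1) ∂μ) =
      fun s => (∫ ω, X ω ^ (-s) ∂μ) * ∫ ω, X ω ^ (-(1 - s)) ∂μ := by
    simp only [neg_sub]
  rw [hsymm]
  exact antitoneOn_monotoneOn_mul_comp_sub (fun s => integral_rpow_pos hXpos (hmoments _)) hlog 1
end

section
/- In the noise-free case, the fractional power control outage probability approximation q̃(λ, s) = 1 − exp(−λπd²β^δ E[H^δ]·E[H^{-sδ}]·E[H^{-(1-s)δ}]) is minimized over s ∈ [0,1] at s = 1/2, and correspondingly λ̃(ε, s) = −log(1−ε)/(πd²β^δ E[H^δ]E[H^{-sδ}]E[H^{-(1-s)δ}]) is maximized at s = 1/2. -/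
open MeasureTheory Real Set

/-!
The whole statement reduces to `E[H^{-δ/2}]² ≤ E[H^{-sδ}] E[H^{-(1-s)δ}]`, since `q̃` is
increasing and `λ̃` decreasing in the product of the last two moments. As
`-δ/2 = (-sδ + -(1-s)δ)/2`, this is the Cauchy–Schwarz inequality applied to `H^{-sδ/2}` and
`H^{-(1-s)δ/2}`, i.e. midpoint log-convexity of `t ↦ E[H^t]`.
-/

namespace MeasureTheory

variable {α : Type*} [MeasurableSpace α] {μ : Measure α}

theorem integral_pos_of_pos [NeZero μ] {f : α → ℝ} (hf : ∀ x, 0 < f x)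
    (hfi : Integrable f μ) : 0 < ∫ x, f x ∂μ := by
  have hsupp : Function.support f = univ := Function.support_eq_univ fun x ↦ (hf x).ne'
  simp [integral_pos_iff_support_of_nonneg (fun x ↦ (hf x).le) hfi, hsupp, NeZero.ne μ]

theorem memLp_two_sqrt {f : α → ℝ} (hf0 : 0 ≤ᵐ[μ] f) (hf : Integrable f μ) :
    MemLp (fun x ↦ √(f x)) 2 μ := by
  refine (memLp_two_iff_integrable_sq
    (continuous_sqrt.comp_aestronglyMeasurable hf.aestronglyMeasurable)).mpr (hf.congr ?_)
  filter_upwards [hf0] with x hx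
  exact (sq_sqrt hx).symm

theorem integral_sqrt_mul_le_sqrt_mul_sqrt {f g : α → ℝ}
    (hf0 : 0 ≤ᵐ[μ] f) (hg0 : 0 ≤ᵐ[μ] g) (hf : Integrable f μ) (hg : Integrable g μ) :
    ∫ x, √(f x * g x) ∂μ ≤ √(∫ x, f x ∂μ) * √(∫ x, g x ∂μ) := by
  have hCS := integral_mul_le_Lp_mul_Lq_of_nonneg Real.HolderConjugate.two_two
    (Filter.Eventually.of_forall fun x ↦ sqrt_nonneg (f x))
    (Filter.Eventually.of_forall fun x ↦ sqrt_nonneg (g x))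
    (by simpa using memLp_two_sqrt hf0 hf) (by simpa using memLp_two_sqrt hg0 hg)
  have hsq : ∀ {h : α → ℝ}, 0 ≤ᵐ[μ] h → ∫ x, √(h x) ^ (2 : ℝ) ∂μ = ∫ x, h x ∂μ :=
    fun h0 ↦ integral_congr_ae (by filter_upwards [h0] with x hx; simp [sq_sqrt hx])
  rw [hsq hf0, hsq hg0, ← sqrt_eq_rpow, ← sqrt_eq_rpow] at hCS
  refine le_of_eq_of_le (integral_congr_ae ?_) hCS
  filter_upwards [hf0] with x hx
  exact sqrt_mul hx (g x)

theorem sq_integral_rpow_add_div_two_le {H : α → ℝ} (hH : ∀ x, 0 < H x) {a b : ℝ}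
    (ha : Integrable (fun x ↦ H x ^ a) μ) (hb : Integrable (fun x ↦ H x ^ b) μ) :
    (∫ x, H x ^ ((a + b) / 2) ∂μ) ^ 2 ≤ (∫ x, H x ^ a ∂μ) * ∫ x, H x ^ b ∂μ := by
  have hmid : ∀ x, H x ^ ((a + b) / 2) = √(H x ^ a * H x ^ b) := fun x ↦ by
    rw [← rpow_add (hH x), sqrt_eq_rpow, ← rpow_mul (hH x).le, div_eq_mul_one_div]
  have hCS := integral_sqrt_mul_le_sqrt_mul_sqrt
    (Filter.Eventually.of_forall fun x ↦ (rpow_pos_of_pos (hH x) a).le)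
    (Filter.Eventually.of_forall fun x ↦ (rpow_pos_of_pos (hH x) b).le) ha hb
  rw [← sqrt_mul (integral_nonneg fun x ↦ (rpow_pos_of_pos (hH x) a).le)] at hCS
  simp only [hmid]
  calc (∫ x, √(H x ^ a * H x ^ b) ∂μ) ^ 2
      ≤ √((∫ x, H x ^ a ∂μ) * ∫ x, H x ^ b ∂μ) ^ 2 :=
        pow_le_pow_left₀ (integral_nonneg fun x ↦ sqrt_nonneg _) hCS 2
    _ = (∫ x, H x ^ a ∂μ) * ∫ x, H x ^ b ∂μ :=
        sq_sqrt (mul_nonneg (integral_nonneg fun x ↦ (rpow_pos_of_pos (hH x) a).le)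
          (integral_nonneg fun x ↦ (rpow_pos_of_pos (hH x) b).le))

theorem integral_rpow_neg_half_mul_le {H : α → ℝ} (hH : ∀ x, 0 < H x) {s δ : ℝ}
    (hs : Integrable (fun x ↦ H x ^ (-(s * δ))) μ)
    (hs' : Integrable (fun x ↦ H x ^ (-((1 - s) * δ))) μ) :
    (∫ x, H x ^ (-((1 / 2 : ℝ) * δ)) ∂μ) * ∫ x, H x ^ (-((1 - (1 / 2 : ℝ)) * δ)) ∂μ
      ≤ (∫ x, H x ^ (-(s * δ)) ∂μ) * ∫ x, H x ^ (-((1 - s) * δ)) ∂μ := by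
  have hmid : -((1 / 2 : ℝ) * δ) = (-(s * δ) + -((1 - s) * δ)) / 2 := by ring
  rw [show (1 - (1 / 2 : ℝ)) = 1 / 2 by norm_num, ← sq, hmid]
  exact sq_integral_rpow_add_div_two_le hH hs hs'

end MeasureTheory

theorem statement17_general {Ω : Type*} [MeasurableSpace Ω] (μ : Measure Ω) [IsProbabilityMeasure μ]
    (H : Ω → ℝ) (hHpos : ∀ ω, 0 < H ω) (δ : ℝ) (hδ : δ ∈ Set.Ioo (0 : ℝ) 1)
    (hint : ∀ t ∈ Set.Icc (-δ) δ, Integrable (fun ω => H ω ^ t) μ)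
    (lam d β ε : ℝ) (hlam : 0 < lam) (hβ : 0 < β) (hε : ε ∈ Set.Ioo (0 : ℝ) 1) :
    ∀ s ∈ Set.Icc (0 : ℝ) 1,
      (1 - Real.exp (-(lam * π * d ^ 2 * β ^ δ * (∫ ω, H ω ^ δ ∂μ)
            * (∫ ω, H ω ^ (-((1/2 : ℝ) * δ)) ∂μ) * ∫ ω, H ω ^ (-((1 - (1/2 : ℝ)) * δ)) ∂μ))
        ≤ 1 - Real.exp (-(lam * π * d ^ 2 * β ^ δ * (∫ ω, H ω ^ δ ∂μ)
            * (∫ ω, H ω ^ (-(s * δ)) ∂μ) * ∫ ω, H ω ^ (-((1 - s) * δ)) ∂μ))) ∧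
      (-Real.log (1 - ε) / (π * d ^ 2 * β ^ δ * (∫ ω, H ω ^ δ ∂μ)
            * (∫ ω, H ω ^ (-(s * δ)) ∂μ) * ∫ ω, H ω ^ (-((1 - s) * δ)) ∂μ)
        ≤ -Real.log (1 - ε) / (π * d ^ 2 * β ^ δ * (∫ ω, H ω ^ δ ∂μ)
            * (∫ ω, H ω ^ (-((1/2 : ℝ) * δ)) ∂μ) * ∫ ω, H ω ^ (-((1 - (1/2 : ℝ)) * δ)) ∂μ)) := by
  intro s hs
  have hmem : ∀ r ∈ Icc (0 : ℝ) 1, -(r * δ) ∈ Icc (-δ) δ := fun r ⟨hr0, hr1⟩ ↦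
    ⟨by nlinarith [hδ.1], by nlinarith [hδ.1]⟩
  have hkey := integral_rpow_neg_half_mul_le hHpos (hint _ (hmem s hs))
    (hint _ (hmem (1 - s) ⟨by linarith [hs.2], by linarith [hs.1]⟩))
  have hhalf_pos : 0 < (∫ ω, H ω ^ (-((1 / 2 : ℝ) * δ)) ∂μ)
      * ∫ ω, H ω ^ (-((1 - (1 / 2 : ℝ)) * δ)) ∂μ := by
    refine mul_pos (integral_pos_of_pos (fun ω ↦ rpow_pos_of_pos (hHpos ω) _) (hint _ ?_))
      (integral_pos_of_pos (fun ω ↦ rpow_pos_of_pos (hHpos ω) _) (hint _ ?_))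
    all_goals exact hmem _ ⟨by norm_num, by norm_num⟩
  have hE : 0 ≤ ∫ ω, H ω ^ δ ∂μ := integral_nonneg fun ω ↦ (rpow_pos_of_pos (hHpos ω) δ).le
  have hlog : 0 ≤ -log (1 - ε) :=
    neg_nonneg.mpr (log_nonpos (by linarith [hε.2]) (by linarith [hε.1]))
  constructor
  · have hexp := exp_le_exp.mpr (neg_le_neg (mul_le_mul_of_nonneg_left hkey
      (by positivity : 0 ≤ lam * π * d ^ 2 * β ^ δ * ∫ ω, H ω ^ δ ∂μ)))
    simp only [← mul_assoc] at hexp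
    linarith
  · have := div_le_div_of_nonneg_left
      (by positivity : 0 ≤ -log (1 - ε) / (π * d ^ 2 * β ^ δ * ∫ ω, H ω ^ δ ∂μ)) hhalf_pos hkey
    simpa only [div_div, mul_assoc] using this

/-- Noise-free case: the FPC outage probability approximation
`q̃(λ,s) = 1 - exp(-λ π d² β^δ E[H^δ] E[H^{-sδ}] E[H^{-(1-s)δ}])` is minimized over
`s ∈ [0,1]` at `s = 1/2`, and correspondingly the transmission intensity
`λ̃(ε,s) = -log(1-ε) / (π d² β^δ E[H^δ] E[H^{-sδ}] E[H^{-(1-s)δ}])` is maximized at `s = 1/2`. -/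
theorem statement17 {Ω : Type*} [MeasurableSpace Ω] (μ : Measure Ω) [IsProbabilityMeasure μ]
    (H : Ω → ℝ) (hHpos : ∀ ω, 0 < H ω) (δ : ℝ) (hδ : δ ∈ Set.Ioo (0 : ℝ) 1)
    (hint : ∀ t ∈ Set.Icc (-δ) δ, Integrable (fun ω => H ω ^ t) μ)
    (lam d β ε : ℝ) (hlam : 0 < lam) (hd : 0 < d) (hβ : 0 < β) (hε : ε ∈ Set.Ioo (0 : ℝ) 1) :
    ∀ s ∈ Set.Icc (0 : ℝ) 1,
      (1 - Real.exp (-(lam * π * d ^ 2 * β ^ δ * (∫ ω, H ω ^ δ ∂μ)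
            * (∫ ω, H ω ^ (-((1/2 : ℝ) * δ)) ∂μ) * ∫ ω, H ω ^ (-((1 - (1/2 : ℝ)) * δ)) ∂μ))
        ≤ 1 - Real.exp (-(lam * π * d ^ 2 * β ^ δ * (∫ ω, H ω ^ δ ∂μ)
            * (∫ ω, H ω ^ (-(s * δ)) ∂μ) * ∫ ω, H ω ^ (-((1 - s) * δ)) ∂μ))) ∧
      (-Real.log (1 - ε) / (π * d ^ 2 * β ^ δ * (∫ ω, H ω ^ δ ∂μ)
            * (∫ ω, H ω ^ (-(s * δ)) ∂μ) * ∫ ω, H ω ^ (-((1 - s) * δ)) ∂μ)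
        ≤ -Real.log (1 - ε) / (π * d ^ 2 * β ^ δ * (∫ ω, H ω ^ δ ∂μ)
            * (∫ ω, H ω ^ (-((1/2 : ℝ) * δ)) ∂μ) * ∫ ω, H ω ^ (-((1 - (1/2 : ℝ)) * δ)) ∂μ)) :=
  statement17_general μ H hHpos δ hδ hint lam d β ε hlam hβ hε
end
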